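/- If γ₁ and γ₂ are elements of Γ(1/8) = { ∑_{k=0}^N a_k 8^k : a_k ∈ {0,2}, N ∈ ℕ } with γ₁ ≠ γ₂, then γ₁ − γ₂ belongs to the set Z = { 8^k(2ℓ+1)/4 : k ≥ 1, ℓ ∈ ℤ }. -/

import Mathlib

/-- The set `Γ(1/8)` of finite sums `∑ aₖ 8^k` with digits `aₖ ∈ {0,2}`. -/
def Gamma8 : Set ℝ :=
  {x | ∃ (N : ℕ) (a : ℕ → ℝ), (∀ k, a k = 0 ∨ a k = 2) ∧
    x = ∑ k ∈ Finset.range N, a k * 8 ^ k}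

/-- The zero set `Z = { 8^k (2ℓ+1) / 4 : k ≥ 1, ℓ ∈ ℤ }`. -/
def Z8 : Set ℝ :=
  {t | ∃ (k : ℕ) (l : ℤ), 1 ≤ k ∧ t = 8 ^ k * (2 * l + 1) / 4}

/-!
Halving the digits, `γ₁ - γ₂ = 2 ∑ dₖ 8^k` with `dₖ ∈ {-1, 0, 1}` not all zero. If `m` is the
first index with `dₘ ≠ 0`, then `∑ dₖ 8^k = 8^m u` with `u ≡ dₘ (mod 8)` odd, so
`γ₁ - γ₂ = 2 · 8^m u = 8^(m+1) u / 4`.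
-/

open Finset

theorem exists_pow_mul_odd_of_sum_digits {b : ℤ} (hb : Even b) {d : ℕ → ℤ}
    (hd : ∀ k, d k = 0 ∨ Odd (d k)) {N : ℕ} (hsum : ∑ k ∈ range N, d k * b ^ k ≠ 0) :
    ∃ m u, Odd u ∧ ∑ k ∈ range N, d k * b ^ k = b ^ m * u := by
  induction N generalizing d with
  | zero => simp at hsum
  | succ N ih =>
    have hshift : ∑ k ∈ range (N + 1), d k * b ^ k
        = d 0 + b * ∑ k ∈ range N, d (k + 1) * b ^ k := by
      rw [sum_range_succ', mul_sum]
      simp only [pow_succ, pow_zero, mul_one]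
      rw [add_comm]
      congr 1
      exact sum_congr rfl fun k _ => by ring
    rw [hshift] at hsum ⊢
    rcases hd 0 with h0 | h0
    · rw [h0, zero_add] at hsum ⊢
      obtain ⟨m, u, hu, hrest⟩ :=
        ih (fun k => hd (k + 1)) (right_ne_zero_of_mul hsum)
      exact ⟨m + 1, u, hu, by rw [hrest, pow_succ']; ring⟩
    · exact ⟨0, _, h0.add_even (hb.mul_right _), by rw [pow_zero, one_mul]⟩

theorem exists_int_digits_of_mem_Gamma8 {x : ℝ} (hx : x ∈ Gamma8) :
    ∃ (N₀ : ℕ) (e : ℕ → ℤ), (∀ k, e k = 0 ∨ e k = 1) ∧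
      ∀ N, N₀ ≤ N → x = 2 * ∑ k ∈ range N, (e k : ℝ) * 8 ^ k := by
  obtain ⟨N₀, a, ha, rfl⟩ := hx
  refine ⟨N₀, fun k => if k < N₀ ∧ a k = 2 then 1 else 0,
    fun k => by by_cases h : k < N₀ ∧ a k = 2 <;> simp [h], fun N hN => ?_⟩
  have htail : ∀ k ∈ range N, k ∉ range N₀ →
      2 * (((if k < N₀ ∧ a k = 2 then 1 else 0 : ℤ) : ℝ) * 8 ^ k) = 0 := fun k _ hk => by
    simp [mem_range.not.mp hk]
  rw [mul_sum, ← sum_subset (range_subset_range.mpr hN) htail]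
  refine sum_congr rfl fun k hk => ?_
  rcases ha k with h | h <;> simp [mem_range.mp hk, h]

theorem exists_sub_eq_two_mul_sum_digits {γ₁ γ₂ : ℝ} (h₁ : γ₁ ∈ Gamma8) (h₂ : γ₂ ∈ Gamma8) :
    ∃ (N : ℕ) (d : ℕ → ℤ), (∀ k, d k = 0 ∨ Odd (d k)) ∧
      γ₁ - γ₂ = 2 * ((∑ k ∈ range N, d k * 8 ^ k : ℤ) : ℝ) := by
  obtain ⟨N₁, e₁, he₁, hγ₁⟩ := exists_int_digits_of_mem_Gamma8 h₁
  obtain ⟨N₂, e₂, he₂, hγ₂⟩ := exists_int_digits_of_mem_Gamma8 h₂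
  refine ⟨max N₁ N₂, fun k => e₁ k - e₂ k, fun k => ?_, ?_⟩
  · rcases he₁ k with h | h <;> rcases he₂ k with h' | h' <;> simp [h, h']
  · rw [hγ₁ _ (le_max_left _ _), hγ₂ _ (le_max_right _ _), ← mul_sub, ← sum_sub_distrib]
    push_cast
    exact congrArg _ (sum_congr rfl fun k _ => by ring)

theorem two_mul_pow_mul_odd_mem_Z8 (m : ℕ) {u : ℤ} (hu : Odd u) :
    2 * ((8 ^ m * u : ℤ) : ℝ) ∈ Z8 := by
  obtain ⟨l, rfl⟩ := hu
  exact ⟨m + 1, l, by omega, by push_cast; ring⟩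

theorem stmt9 (γ₁ γ₂ : ℝ) (h₁ : γ₁ ∈ Gamma8) (h₂ : γ₂ ∈ Gamma8) (hne : γ₁ ≠ γ₂) :
    γ₁ - γ₂ ∈ Z8 := by
  obtain ⟨N, d, hd, hdiff⟩ := exists_sub_eq_two_mul_sum_digits h₁ h₂
  have hsum : ∑ k ∈ range N, d k * 8 ^ k ≠ 0 := by
    intro h
    rw [h, Int.cast_zero, mul_zero, sub_eq_zero] at hdiff
    exact hne hdiff
  obtain ⟨m, u, hu, hmu⟩ := exists_pow_mul_odd_of_sum_digits (by decide : Even (8 : ℤ)) hd hsum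
  rw [hdiff, hmu]
  exact two_mul_pow_mul_odd_mem_Z8 m hu
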